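/- arXiv:2006.02854 — 11 statements merged into one kernel-verified Lean document; each statement's English description precedes it below -/
import Mathlib

section
/- For any first-order language L of algebras, any two L-algebras A and B, any L-term t(z) in one variable, any element a of A, and any element c of B, the analogical proportion a : t^A(a) :: c : t^B(c) holds in (A,B). Moreover, {z → t(z)} is a characteristic justification of this proportion. -/
/- Analogical proportions (Antić): single-variable terms over a language of algebras. -/

/-- A term over a language with function symbols `F` of arities `ar`, in the single variable `z`.
Constant symbols are function symbols of arity 0. -/
inductive Term (F : Type*) (ar : F → ℕ) : Type _ where
  | var : Term F ar
  | app : (f : F) → (Fin (ar f) → Term F ar) → Term F ar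

/-- An algebra for the language `(F, ar)` with universe `A`. -/
structure Alg (F : Type*) (ar : F → ℕ) (A : Type*) where
  interp : (f : F) → (Fin (ar f) → A) → A

variable {F : Type*} {ar : F → ℕ} {A B : Type*}

/-- Evaluation of a term at `z := x`. -/
def Term.eval (𝔸 : Alg F ar A) (x : A) : Term F ar → A
  | .var => x
  | .app f ts => 𝔸.interp f fun i => (ts i).eval 𝔸 x

/-- The set of justifications `s → t` of a pair `(a, b)` in the algebra `𝔸`:
pairs of terms such that `a = s(e)` and `b = t(e)` for some witness `e`. -/
def Jus (𝔸 : Alg F ar A) (a b : A) : Set (Term F ar × Term F ar) :=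
  {p | ∃ e : A, p.1.eval 𝔸 e = a ∧ p.2.eval 𝔸 e = b}

/-- Justifications of `a : b :: c : d` in `(𝔸, 𝔹)`. -/
def JusP (𝔸 : Alg F ar A) (𝔹 : Alg F ar B) (a b : A) (c d : B) :
    Set (Term F ar × Term F ar) :=
  Jus 𝔸 a b ∩ Jus 𝔹 c d

/-- `(𝔸, 𝔹) ⊨ a : b :: c : d`: the set of justifications is subset-maximal w.r.t. `d`. -/
def Proportion (𝔸 : Alg F ar A) (𝔹 : Alg F ar B) (a b : A) (c d : B) : Prop :=
  ∀ d' : B, JusP 𝔸 𝔹 a b c d ⊆ JusP 𝔸 𝔹 a b c d' →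
    JusP 𝔸 𝔹 a b c d' ⊆ JusP 𝔸 𝔹 a b c d

/-- `j` is a characteristic justification of `a : b :: c : d` in `(𝔸, 𝔹)`. -/
def CharJus (𝔸 : Alg F ar A) (𝔹 : Alg F ar B) (a b : A) (c d : B)
    (j : Term F ar × Term F ar) : Prop :=
  j ∈ JusP 𝔸 𝔹 a b c d ↔ Proportion 𝔸 𝔹 a b c d

/-- functional proportions `a : t(a) :: c : t(c)` always hold,
characteristically justified by `z → t(z)`. -/
theorem functional_proportion {F : Type*} {ar : F → ℕ} {A B : Type*}
    (𝔸 : Alg F ar A) (𝔹 : Alg F ar B) (t : Term F ar) (a : A) (c : B) :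
    Proportion 𝔸 𝔹 a (t.eval 𝔸 a) c (t.eval 𝔹 c) ∧
      CharJus 𝔸 𝔹 a (t.eval 𝔸 a) c (t.eval 𝔹 c) (Term.var, t) := by
  have hmem : (Term.var, t) ∈ JusP 𝔸 𝔹 a (t.eval 𝔸 a) c (t.eval 𝔹 c) :=
    ⟨⟨a, rfl, rfl⟩, ⟨c, rfl, rfl⟩⟩
  have hprop : Proportion 𝔸 𝔹 a (t.eval 𝔸 a) c (t.eval 𝔹 c) := by
    intro d' hsub
    obtain ⟨_, e, he, ht⟩ := hsub hmem
    have : d' = t.eval 𝔹 c := by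
      simp [Term.eval] at he; rw [he] at ht; exact ht.symm
    rw [this]
  exact ⟨hprop, ⟨fun _ => hprop, fun _ => hmem⟩⟩
end

section
/- Let s(z) → t(z) be a justification of a:b::c:d in (A,B) such that there is a unique tuple e in B^|z| with c = s^B(e). Then s → t is a characteristic justification of a:b::c:d in (A,B): for any d' in B, s → t justifies a:b::c:d' iff d' = d, and consequently (A,B) ⊨ a:b::c:d. -/
variable {F : Type*} {ar : F → ℕ} {A B : Type*}

/-- a justification `s → t` of `a:b::c:d` such that
there is a unique witness `e` with `c = s^𝔹(e)` is characteristic. -/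
theorem unique_witness_characteristic {F : Type*} {ar : F → ℕ} {A B : Type*}
    (𝔸 : Alg F ar A) (𝔹 : Alg F ar B) (s t : Term F ar) (a : A) (b : A) (c d : B)
    (hj : (s, t) ∈ JusP 𝔸 𝔹 a b c d)
    (huniq : ∃! e : B, s.eval 𝔹 e = c) :
    (∀ d' : B, (s, t) ∈ JusP 𝔸 𝔹 a b c d' ↔ d' = d) ∧
      Proportion 𝔸 𝔹 a b c d ∧ CharJus 𝔸 𝔹 a b c d (s, t) := by
  obtain ⟨hA, e0, hse, hte⟩ := hj
  have key : ∀ d' : B, (s, t) ∈ JusP 𝔸 𝔹 a b c d' ↔ d' = d := by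
    intro d'
    constructor
    · rintro ⟨-, e1, hs1, ht1⟩
      have h1 := huniq.unique hs1 hse
      rw [← ht1, h1, hte]
    · rintro rfl
      exact ⟨hA, e0, hse, hte⟩
  have hprop : Proportion 𝔸 𝔹 a b c d := by
    intro d' hsub
    have : (s, t) ∈ JusP 𝔸 𝔹 a b c d' := hsub ⟨hA, e0, hse, hte⟩
    rw [(key d').1 this]
  exact ⟨key, hprop, fun _ => hprop, fun _ => ⟨hA, e0, hse, hte⟩⟩
end

section
/- Strong reflexivity for distinguished elements: if b is the interpretation of a constant symbol of L in the L-algebra A, then for any a, d in A, A ⊨ a:b::a:d implies d = b. In particular, for any d ≠ b one has the strict inclusion Jus_A(a:b::a:d) ⊊ Jus_A(a:b::a:b), since the justification z → b lies in the latter but not the former. -/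
variable {F : Type*} {ar : F → ℕ} {A B : Type*}

lemma const_eval {F : Type*} {ar : F → ℕ} {A : Type*}
    (𝔸 : Alg F ar A) (c0 : F) (h0 : ar c0 = 0) (e : A) :
    (Term.app c0 (fun i => (Fin.cast h0 i).elim0)).eval 𝔸 e
      = 𝔸.interp c0 (fun i => (Fin.cast h0 i).elim0) := by
  show 𝔸.interp c0 _ = _
  congr 1
  funext i
  exact (Fin.cast h0 i).elim0

/-- strong reflexivity for distinguished elements: if `b` is the
interpretation of a constant symbol `c0`, then `𝔸 ⊨ a:b::a:d` implies `d = b`;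
moreover for `d ≠ b` we have the strict inclusion witnessed by `z → b`. -/
theorem strong_reflexivity_of_distinguished {F : Type*} {ar : F → ℕ} {A : Type*}
    (𝔸 : Alg F ar A) (c0 : F) (h0 : ar c0 = 0) (a d b : A)
    (hb : b = 𝔸.interp c0 (fun i => (Fin.cast h0 i).elim0)) :
    (Proportion 𝔸 𝔸 a b a d → d = b) ∧
    (d ≠ b →
      (Term.var, Term.app c0 (fun i => (Fin.cast h0 i).elim0)) ∈ JusP 𝔸 𝔸 a b a b ∧
      (Term.var, Term.app c0 (fun i => (Fin.cast h0 i).elim0)) ∉ JusP 𝔸 𝔸 a b a d ∧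
      JusP 𝔸 𝔸 a b a d ⊂ JusP 𝔸 𝔸 a b a b) := by
  have hsub : JusP 𝔸 𝔸 a b a d ⊆ JusP 𝔸 𝔸 a b a b := by
    intro j hj
    exact ⟨hj.1, hj.1⟩
  have hmem : (Term.var, Term.app c0 (fun i => (Fin.cast h0 i).elim0)) ∈ JusP 𝔸 𝔸 a b a b := by
    refine ⟨⟨a, rfl, ?_⟩, ⟨a, rfl, ?_⟩⟩ <;> rw [const_eval, ← hb]
  constructor
  · intro hp
    have := hp b hsub hmem
    have h2 := this.2
    obtain ⟨e, -, he⟩ := h2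
    rw [const_eval, ← hb] at he
    exact he.symm
  · intro hd
    refine ⟨hmem, ?_, ?_⟩
    · rintro ⟨-, e, -, he⟩
      rw [const_eval, ← hb] at he
      exact hd he.symm
    · refine ⟨hsub, fun h => ?_⟩
      have := h hmem
      obtain ⟨e, -, he⟩ := this.2
      rw [const_eval, ← hb] at he
      exact hd he.symm
end

section
/- Strong reflexivity fails in general: in the structure (A) consisting of a universe A containing at least three distinct elements a, b, d and no functions or constants, one has Jus_{(A)}(a:b::a:d') = ∅ for all d' in A, hence (A) ⊨ a:b::a:d holds even though d ≠ b. -/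
variable {F : Type*} {ar : F → ℕ} {A B : Type*}

/-- strong reflexivity fails in general: in a structure over the
empty language with three distinct elements `a, b, d`, all justification sets
`Jus(a:b::a:d')` are empty, hence `a:b::a:d` holds although `d ≠ b`. -/
theorem strong_reflexivity_fails {A : Type*}
    (𝔸 : Alg Empty (fun e => e.elim) A) (a b d : A)
    (hab : a ≠ b) (had : a ≠ d) (hbd : b ≠ d) :
    (∀ d' : A, JusP 𝔸 𝔸 a b a d' = ∅) ∧ Proportion 𝔸 𝔸 a b a d := by
  have key : ∀ d' : A, JusP 𝔸 𝔸 a b a d' = ∅ := by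
    intro d'
    ext p
    simp only [JusP, Jus, Set.mem_inter_iff, Set.mem_setOf_eq, Set.mem_empty_iff_false,
      iff_false, not_and]
    rintro ⟨e, h1, h2⟩
    cases hp1 : p.1 with
    | var =>
      cases hp2 : p.2 with
      | var =>
        rw [hp1] at h1; rw [hp2] at h2
        simp [Term.eval] at h1 h2
        exact absurd (h1.symm.trans h2) hab
      | app f ts => exact f.elim
    | app f ts => exact f.elim
  refine ⟨key, fun d' _ _ => ?_⟩
  rw [key d']
  exact fun h => h.elim
end

section
/- Central permutation fails in general: in the algebra BOOL = ({0,1}, ∨, 0, 1) (booleans with disjunction and both constants), the proportion 1:1::0:1 holds (characteristically justified by z → 1), but the proportion 1:0::1:1 does not hold. Specifically, every justification s → t of 1:0::1:1 in BOOL also justifies 1:0::1:0, while z → 0 (i.e., the constant justification 1 → 0 via constants) justifies 1:0::1:0 but not 1:0::1:1; hence Jus_BOOL(1:0::1:1) ⊊ Jus_BOOL(1:0::1:0). -/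
variable {F : Type*} {ar : F → ℕ} {A B : Type*}

/-- The language of `BOOL = ({0,1}, ∨, 0, 1)`. -/
inductive BoolSym : Type | or | zero | one
def boolAr : BoolSym → ℕ | .or => 2 | .zero => 0 | .one => 0

/-- The boolean algebra with disjunction and both constants. -/
def BOOL : Alg BoolSym boolAr Bool :=
  ⟨fun f => match f with
    | .or => fun v => v ⟨0, Nat.zero_lt_two⟩ || v ⟨1, Nat.one_lt_two⟩
    | .zero => fun _ => false
    | .one => fun _ => true⟩

/-- The constant term `0`. -/
def tzero : Term BoolSym boolAr := Term.app .zero (fun i => i.elim0)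
/-- The constant term `1`. -/
def tone : Term BoolSym boolAr := Term.app .one (fun i => i.elim0)

lemma tone_eval (e : Bool) : tone.eval BOOL e = true := rfl
lemma tzero_eval (e : Bool) : tzero.eval BOOL e = false := rfl

lemma mem_vartone : (Term.var, tone) ∈ JusP BOOL BOOL true true false true :=
  ⟨⟨true, rfl, rfl⟩, ⟨false, rfl, rfl⟩⟩

lemma prop1101 : Proportion BOOL BOOL true true false true := by
  intro d' h
  cases d' with
  | true => exact fun j hj => hj
  | false =>
    exfalso
    obtain ⟨_, e, _, h2⟩ := h mem_vartone
    simp [tone_eval] at h2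

lemma mem1010 : (tone, tzero) ∈ JusP BOOL BOOL true false true false :=
  ⟨⟨true, rfl, rfl⟩, ⟨true, rfl, rfl⟩⟩

lemma notmem1011 : (tone, tzero) ∉ JusP BOOL BOOL true false true true := by
  rintro ⟨_, e, _, h2⟩
  simp [tzero_eval] at h2

lemma sub1011 : ∀ j ∈ JusP BOOL BOOL true false true true,
    j ∈ JusP BOOL BOOL true false true false :=
  fun _ hj => ⟨hj.1, hj.1⟩

/-- central permutation fails in `BOOL`: `1:1::0:1` holds
(characteristically justified by `z → 1`) but `1:0::1:1` does not; every
justification of `1:0::1:1` also justifies `1:0::1:0`, while `1 → 0` justifies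
`1:0::1:0` but not `1:0::1:1`, so `Jus(1:0::1:1) ⊊ Jus(1:0::1:0)`. -/
theorem central_permutation_fails :
    (Proportion BOOL BOOL true true false true ∧
      CharJus BOOL BOOL true true false true (Term.var, tone)) ∧
    (∀ j ∈ JusP BOOL BOOL true false true true, j ∈ JusP BOOL BOOL true false true false) ∧
    (tone, tzero) ∈ JusP BOOL BOOL true false true false ∧
    (tone, tzero) ∉ JusP BOOL BOOL true false true true ∧
    JusP BOOL BOOL true false true true ⊂ JusP BOOL BOOL true false true false ∧
    ¬ Proportion BOOL BOOL true false true true := by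
  refine ⟨⟨prop1101, ⟨fun _ => prop1101, fun _ => mem_vartone⟩⟩, sub1011, mem1010,
    notmem1011, ⟨sub1011, fun h => notmem1011 (h mem1010)⟩, fun hp => ?_⟩
  exact notmem1011 (hp false sub1011 mem1010)
end

section
/- Strong determinism fails in general: in the algebra (ℤ, ·, 1) (integers with multiplication and constant 1), both (ℤ,·,1) ⊨ 1:1::(-1):(-1) (justified characteristically by z → z) and (ℤ,·,1) ⊨ 1:1::(-1):1 (justified characteristically by z → z·z) hold; hence the equation 1:1::(-1):z has a solution z ≠ -1. -/
variable {F : Type*} {ar : F → ℕ} {A B : Type*}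

/-- The language of `(ℤ, ·, 1)`. -/
inductive MulSym : Type | mul | one
def mulAr : MulSym → ℕ | .mul => 2 | .one => 0

/-- The algebra of integers with multiplication and the constant 1. -/
def ZMul : Alg MulSym mulAr ℤ :=
  ⟨fun f => match f with
    | .mul => fun v => v ⟨0, Nat.zero_lt_two⟩ * v ⟨1, Nat.one_lt_two⟩
    | .one => fun _ => 1⟩

/-- The term `z · z`. -/
def sqT : Term MulSym mulAr := Term.app .mul (![Term.var, Term.var] : Fin 2 → _)

/-- strong determinism fails: in `(ℤ, ·, 1)` both
`1:1::(-1):(-1)` (characteristically justified by `z → z`) and `1:1::(-1):1`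
(characteristically justified by `z → z·z`) hold; hence the equation
`1:1::(-1):z` has a solution `z ≠ -1`. -/
theorem strong_determinism_fails :
    (Proportion ZMul ZMul 1 1 (-1) (-1) ∧
      CharJus ZMul ZMul 1 1 (-1) (-1) (Term.var, Term.var)) ∧
    (Proportion ZMul ZMul 1 1 (-1) 1 ∧
      CharJus ZMul ZMul 1 1 (-1) 1 (Term.var, sqT)) ∧
    ∃ d : ℤ, d ≠ -1 ∧ Proportion ZMul ZMul 1 1 (-1) d := by
  have hsq : ∀ e : ℤ, sqT.eval ZMul e = e * e := fun e => rfl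
  have hmem1 : (Term.var, Term.var) ∈ JusP ZMul ZMul 1 1 (-1) (-1) :=
    ⟨⟨1, rfl, rfl⟩, ⟨-1, rfl, rfl⟩⟩
  have hmem2 : (Term.var, sqT) ∈ JusP ZMul ZMul 1 1 (-1) 1 :=
    ⟨⟨1, rfl, by rw [hsq]; norm_num⟩, ⟨-1, rfl, by rw [hsq]; norm_num⟩⟩
  have hp1 : Proportion ZMul ZMul 1 1 (-1) (-1) := by
    intro d' h
    obtain ⟨_, e, he1, he2⟩ := h hmem1
    have : d' = -1 := by simp [Term.eval] at he1 he2; omega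
    subst this; exact fun x hx => hx
  have hp2 : Proportion ZMul ZMul 1 1 (-1) 1 := by
    intro d' h
    obtain ⟨_, e, he1, he2⟩ := h hmem2
    rw [hsq] at he2
    have he1' : e = -1 := he1
    have : d' = 1 := by subst he1'; omega
    subst this; exact fun x hx => hx
  exact ⟨⟨hp1, ⟨fun _ => hp1, fun _ => hmem1⟩⟩,
    ⟨hp2, ⟨fun _ => hp2, fun _ => hmem2⟩⟩, 1, by norm_num, hp2⟩
end

section
/- Set complement proportion: in the pair of powerset algebras A = (P(U), ∩, ∪, complement, constants P(U)∩P(V)) and B = (P(V), ∩, ∪, complement, constants P(U)∩P(V)), for any A ∈ P(U) and C ∈ P(V) the analogical proportion A : Aᶜ :: C : Cᶜ holds in (A,B). -/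
variable {F : Type*} {ar : F → ℕ} {A B : Type*}

/-- The language of sets `{∩, ∪, ᶜ}` with a constant symbol for each set in
`P(U) ∩ P(V)`, i.e. each set contained in both universes `U` and `V`. -/
inductive SetSym (Ω : Type*) (U V : Set Ω) : Type _ where
  | inter | union | compl
  | const : (K : Set Ω) → K ⊆ U → K ⊆ V → SetSym Ω U V

def setAr {Ω : Type*} {U V : Set Ω} : SetSym Ω U V → ℕ
  | .inter => 2 | .union => 2 | .compl => 1 | .const _ _ _ => 0

/-- The powerset algebra `P(W)` of a universe `W` (complement is relative to `W`). -/
def PowAlg {Ω : Type*} (U V : Set Ω) (W : Set Ω) (hW : W = U ∨ W = V) :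
    Alg (SetSym Ω U V) setAr {X : Set Ω // X ⊆ W} :=
  ⟨fun f => match f with
    | .inter => fun v => ⟨(v ⟨0, Nat.zero_lt_two⟩ : {X : Set Ω // X ⊆ W}) ∩
        (v ⟨1, Nat.one_lt_two⟩ : {X : Set Ω // X ⊆ W}),
        fun x hx => (v ⟨0, Nat.zero_lt_two⟩).2 hx.1⟩
    | .union => fun v => ⟨(v ⟨0, Nat.zero_lt_two⟩ : {X : Set Ω // X ⊆ W}) ∪
        (v ⟨1, Nat.one_lt_two⟩ : {X : Set Ω // X ⊆ W}),
        Set.union_subset (v ⟨0, Nat.zero_lt_two⟩).2 (v ⟨1, Nat.one_lt_two⟩).2⟩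
    | .compl => fun v => ⟨W \ (v ⟨0, Nat.zero_lt_one⟩ : {X : Set Ω // X ⊆ W}),
        Set.diff_subset⟩
    | .const K hU hV => fun _ => ⟨K, by rcases hW with h | h <;> simp [h, hU, hV]⟩⟩

/-- set complement proportion `A : Aᶜ :: C : Cᶜ` holds in the
pair of powerset algebras of `U` and `V` (complements relative to the universes). -/
theorem complement_proportion {Ω : Type*} (U V : Set Ω)
    (A : Set Ω) (hA : A ⊆ U) (C : Set Ω) (hC : C ⊆ V) :
    Proportion (PowAlg U V U (Or.inl rfl)) (PowAlg U V V (Or.inr rfl))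
      ⟨A, hA⟩ ⟨U \ A, Set.diff_subset⟩ ⟨C, hC⟩ ⟨V \ C, Set.diff_subset⟩ := by
  intro d' hsub
  have hj : (Term.var, Term.app SetSym.compl (fun _ => Term.var)) ∈
      JusP (PowAlg U V U (Or.inl rfl)) (PowAlg U V V (Or.inr rfl))
        ⟨A, hA⟩ ⟨U \ A, Set.diff_subset⟩ ⟨C, hC⟩ ⟨V \ C, Set.diff_subset⟩ :=
    ⟨⟨⟨A, hA⟩, rfl, rfl⟩, ⟨⟨C, hC⟩, rfl, rfl⟩⟩
  obtain ⟨e, he1, he2⟩ := (hsub hj).2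
  have : d' = ⟨V \ C, Set.diff_subset⟩ := by
    subst he1; exact he2.symm
  rw [this]
end

section
/- Miclet–Bayoudh–Delhay set proportions are subsumed: for a finite universe U and sets A, B, C, D ⊆ U, if there exist sets E, F with B = (A − E) ∪ F and D = (C − E) ∪ F, then the analogical proportion A : B :: C : D holds in the powerset algebra (P(U), ∩, ∪, ᶜ) with every subset of U as a distinguished constant. -/
variable {F : Type*} {ar : F → ℕ} {A B : Type*}

/-- The language of sets `{∩, ∪, ᶜ}` with a constant symbol for every subset of `U`. -/
inductive PSym (U : Type*) : Type _ where
  | inter | union | compl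
  | const : Set U → PSym U

def pAr {U : Type*} : PSym U → ℕ
  | .inter => 2 | .union => 2 | .compl => 1 | .const _ => 0

/-- The powerset boolean algebra of `U` with every subset as distinguished constant. -/
def PAlg (U : Type*) : Alg (PSym U) pAr (Set U) :=
  ⟨fun f => match f with
    | .inter => fun v => v ⟨0, Nat.zero_lt_two⟩ ∩ v ⟨1, Nat.one_lt_two⟩
    | .union => fun v => v ⟨0, Nat.zero_lt_two⟩ ∪ v ⟨1, Nat.one_lt_two⟩
    | .compl => fun v => (v ⟨0, Nat.zero_lt_one⟩)ᶜ
    | .const K => fun _ => K⟩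

/-!
The pair `z → (z − E) ∪ F` justifies both `A : B` and `C : D`. Its source term is the bare
variable, so the witness of any justification by it is forced: a `d'` admitting every
justification of `A : B :: C : D` must satisfy `d' = (C − E) ∪ F = D`.
-/

theorem Proportion.of_var_mem_jusP {𝔸 : Alg F ar A} {𝔹 : Alg F ar B} {a b : A} {c d : B}
    {t : Term F ar} (ht : (.var, t) ∈ JusP 𝔸 𝔹 a b c d) : Proportion 𝔸 𝔹 a b c d := by
  intro d' hsub
  obtain ⟨hab, e, rfl, rfl⟩ := ht
  obtain ⟨-, e', rfl, rfl⟩ := hsub ⟨hab, e, rfl, rfl⟩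
  exact subset_rfl

namespace PSym

variable {U : Type*}

def diffUnionTerm (E F : Set U) : Term (PSym U) pAr :=
  .app .union ![.app .inter ![.var, .app .compl ![.app (.const E) ![]]], .app (.const F) ![]]

theorem eval_diffUnionTerm (E F x : Set U) :
    (diffUnionTerm E F).eval (PAlg U) x = (x \ E) ∪ F :=
  rfl

end PSym

open PSym in
theorem MBD_subsumed_general {U : Type*} (A B C D E F : Set U)
    (hB : B = (A \ E) ∪ F) (hD : D = (C \ E) ∪ F) :
    Proportion (PAlg U) (PAlg U) A B C D :=
  Proportion.of_var_mem_jusP (t := diffUnionTerm E F)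
    ⟨⟨A, rfl, (eval_diffUnionTerm E F A).trans hB.symm⟩,
      ⟨C, rfl, (eval_diffUnionTerm E F C).trans hD.symm⟩⟩

/-- Miclet–Bayoudh–Delhay set proportions are subsumed: over a
finite universe `U`, if `B = (A − E) ∪ F` and `D = (C − E) ∪ F`, then
`A : B :: C : D` holds in the powerset algebra of `U` with all constants. -/
theorem MBD_subsumed {U : Type*} [Finite U] (A B C D E F : Set U)
    (hB : B = (A \ E) ∪ F) (hD : D = (C \ E) ∪ F) :
    Proportion (PAlg U) (PAlg U) A B C D :=
  MBD_subsumed_general A B C D E F hB hD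
end

section
/- The converse of the MBD subsumption fails: in (P({a,b}), ∩, ∪, ᶜ) with all subsets as constants, {a,b} is a solution to the analogical equation {a} : {b} :: ∅ : Z (since {b} = {a}ᶜ and {a,b} = ∅ᶜ, justified by Z → Zᶜ), yet there are no sets E, F ⊆ {a,b} with {b} = ({a} − E) ∪ F and {a,b} = (∅ − E) ∪ F. -/
variable {F : Type*} {ar : F → ℕ} {A B : Type*}

/-- The term `Zᶜ`. -/
def complT {U : Type*} : Term (PSym U) pAr := Term.app .compl (fun _ => Term.var)

/-- the converse of the MBD subsumption fails: over the
two-element universe `{a, b}` (here `Bool`), `{a,b}` solves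
`{a} : {b} :: ∅ : Z` (justified by `Z → Zᶜ`, since `{b} = {a}ᶜ` and
`{a,b} = ∅ᶜ`), yet no sets `E, F` satisfy the MBD condition. -/
theorem MBD_converse_fails :
    (Term.var, complT) ∈
      JusP (PAlg Bool) (PAlg Bool) {false} {true} (∅ : Set Bool) Set.univ ∧
    Proportion (PAlg Bool) (PAlg Bool) {false} {true} (∅ : Set Bool) Set.univ ∧
    ¬ ∃ E F : Set Bool,
        ({true} : Set Bool) = (({false} : Set Bool) \ E) ∪ F ∧
        (Set.univ : Set Bool) = ((∅ : Set Bool) \ E) ∪ F := by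
  have hmem : (Term.var, complT) ∈
      JusP (PAlg Bool) (PAlg Bool) {false} {true} (∅ : Set Bool) Set.univ := by
    constructor
    · exact ⟨{false}, rfl, by simp [complT, Term.eval, PAlg, Set.ext_iff, Bool.eq_false_iff]⟩
    · exact ⟨∅, rfl, by simp [complT, Term.eval, PAlg]⟩
  refine ⟨hmem, ?_, ?_⟩
  · intro d' h
    obtain ⟨-, e, he, he'⟩ := h hmem
    have : d' = Set.univ := by
      simp only [complT, Term.eval, PAlg] at he'
      rw [← he']
      simp [Term.eval] at he
      simp [Term.eval, he]
    rw [this]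
  · rintro ⟨E, F, h1, h2⟩
    have hF : false ∈ F := by
      have : (false : Bool) ∈ (Set.univ : Set Bool) := Set.mem_univ _
      rw [h2] at this
      simpa using this
    have : (false : Bool) ∈ ({true} : Set Bool) := by
      rw [h1]; exact Or.inr hF
    simp at this
end

section
/- Affine numerical proportions: in (ℤ, +, ℤ) (integers with addition and every integer as a distinguished constant), for all integers a, c, k, ℓ, m, n with k ≠ 0, the proportion (ka + ℓ) : (ma + n) :: (kc + ℓ) : (mc + n) holds, characteristically justified by kz + ℓ → mz + n (using that z ↦ kz + ℓ is injective on ℤ for k ≠ 0). -/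
variable {F : Type*} {ar : F → ℕ} {A B : Type*}

/-- The language of `(ℤ, +, −, ℤ)`: addition, negation, and a constant symbol
for every integer. -/
inductive ZSym : Type | plus | neg | const : ℤ → ZSym
def zAr : ZSym → ℕ | .plus => 2 | .neg => 1 | .const _ => 0

/-- The algebra `(ℤ, +, −, ℤ)`. -/
def ZAlg : Alg ZSym zAr ℤ :=
  ⟨fun f => match f with
    | .plus => fun v => v ⟨0, Nat.zero_lt_two⟩ + v ⟨1, Nat.one_lt_two⟩
    | .neg => fun v => -(v ⟨0, Nat.zero_lt_one⟩)
    | .const k => fun _ => k⟩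

/-- The constant term `k`. -/
def constT (k : ℤ) : Term ZSym zAr := Term.app (.const k) (fun i => i.elim0)
/-- The sum `s + t` as a term. -/
def plusT (s t : Term ZSym zAr) : Term ZSym zAr := Term.app .plus (![s, t] : Fin 2 → _)
/-- The negation `−t` as a term. -/
def negT (t : Term ZSym zAr) : Term ZSym zAr := Term.app .neg (fun _ => t)
/-- The term `n·t = t + ⋯ + t` (`n` times) for natural `n`. -/
def nsmulT : ℕ → Term ZSym zAr → Term ZSym zAr
  | 0, _ => constT 0
  | n + 1, t => plusT (nsmulT n t) t
/-- The term `k·t` for an integer `k` (negation of a repeated sum for `k < 0`). -/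
def zsmulT (k : ℤ) (t : Term ZSym zAr) : Term ZSym zAr :=
  if 0 ≤ k then nsmulT k.toNat t else negT (nsmulT (-k).toNat t)
/-- The affine term `k·z + ℓ`. -/
def linT (k l : ℤ) : Term ZSym zAr := plusT (zsmulT k Term.var) (constT l)

lemma eval_constT (x k : ℤ) : (constT k).eval ZAlg x = k := rfl

lemma eval_plusT (x : ℤ) (s t : Term ZSym zAr) :
    (plusT s t).eval ZAlg x = s.eval ZAlg x + t.eval ZAlg x := rfl

lemma eval_negT (x : ℤ) (t : Term ZSym zAr) :
    (negT t).eval ZAlg x = -(t.eval ZAlg x) := rfl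

lemma eval_nsmulT (x : ℤ) (t : Term ZSym zAr) (n : ℕ) :
    (nsmulT n t).eval ZAlg x = n * t.eval ZAlg x := by
  induction n with
  | zero => simp [nsmulT, eval_constT]
  | succ n ih => rw [nsmulT, eval_plusT, ih]; push_cast; ring

lemma eval_zsmulT (x : ℤ) (t : Term ZSym zAr) (k : ℤ) :
    (zsmulT k t).eval ZAlg x = k * t.eval ZAlg x := by
  unfold zsmulT
  split <;> rename_i h
  · rw [eval_nsmulT, Int.toNat_of_nonneg h]
  · rw [eval_negT, eval_nsmulT, Int.toNat_of_nonneg (by omega)]; ring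

lemma eval_linT (x k l : ℤ) : (linT k l).eval ZAlg x = k * x + l := by
  rw [linT, eval_plusT, eval_zsmulT, eval_constT]; rfl

/-- affine numerical proportions: for `k ≠ 0`,
`(ka + ℓ) : (ma + n) :: (kc + ℓ) : (mc + n)` holds in `(ℤ, +, ℤ)`,
characteristically justified by `kz + ℓ → mz + n`. -/
theorem affine_proportion (a c k l m n : ℤ) (hk : k ≠ 0) :
    Proportion ZAlg ZAlg (k * a + l) (m * a + n) (k * c + l) (m * c + n) ∧
      CharJus ZAlg ZAlg (k * a + l) (m * a + n) (k * c + l) (m * c + n)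
        (linT k l, linT m n) := by
  have hmem : (linT k l, linT m n) ∈
      JusP ZAlg ZAlg (k * a + l) (m * a + n) (k * c + l) (m * c + n) :=
    ⟨⟨a, by rw [eval_linT], by rw [eval_linT]⟩,
     ⟨c, by rw [eval_linT], by rw [eval_linT]⟩⟩
  have hprop : Proportion ZAlg ZAlg (k * a + l) (m * a + n) (k * c + l) (m * c + n) := by
    intro d' hsub
    obtain ⟨_, e, he1, he2⟩ := hsub hmem
    rw [eval_linT] at he1 he2
    have : e = c := by
      have : k * e = k * c := by omega
      exact mul_left_cancel₀ hk this
    subst this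
    rw [← he2]
  exact ⟨hprop, ⟨fun _ => hprop, fun _ => hmem⟩⟩
end

section
/- The converse of the difference proportion fails: in (ℤ, +, −, ℤ), for all integers a and c the proportion a : 2a :: c : 2c holds (justified by z → z + z), whereas 2a − a = 2c − c holds iff a = c. Hence there exist a, b, c, d with ⊨ a:b::c:d but b − a ≠ d − c. -/
variable {F : Type*} {ar : F → ℕ} {A B : Type*}

theorem mem_Jus_var_left_iff (𝔸 : Alg F ar A) (t : Term F ar) (a b : A) :
    (Term.var, t) ∈ Jus 𝔸 a b ↔ t.eval 𝔸 a = b :=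
  ⟨fun ⟨_, rfl, he⟩ => he, fun h => ⟨a, rfl, h⟩⟩

/-- A justification `z → t` pins `d` down to `t(c)`, so no `d'` can have more justifications. -/
theorem proportion_eval_of_var (𝔸 : Alg F ar A) (𝔹 : Alg F ar B) (t : Term F ar)
    (a : A) (c : B) :
    Proportion 𝔸 𝔹 a (t.eval 𝔸 a) c (t.eval 𝔹 c) := by
  intro d' hsub
  have hj : (Term.var, t) ∈ JusP 𝔸 𝔹 a (t.eval 𝔸 a) c (t.eval 𝔹 c) :=
    ⟨(mem_Jus_var_left_iff 𝔸 t _ _).2 rfl, (mem_Jus_var_left_iff 𝔹 t _ _).2 rfl⟩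
  have hd' : t.eval 𝔹 c = d' := (mem_Jus_var_left_iff 𝔹 t c d').1 (hsub hj).2
  rw [hd']

theorem eval_var_add_var (x : ℤ) : (plusT Term.var Term.var).eval ZAlg x = 2 * x := by
  change x + x = 2 * x
  ring

theorem proportion_two_mul (a c : ℤ) : Proportion ZAlg ZAlg a (2 * a) c (2 * c) := by
  simpa only [eval_var_add_var] using proportion_eval_of_var ZAlg ZAlg (plusT Term.var Term.var) a c

theorem var_add_var_mem_JusP (a c : ℤ) :
    (Term.var, plusT Term.var Term.var) ∈ JusP ZAlg ZAlg a (2 * a) c (2 * c) :=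
  ⟨(mem_Jus_var_left_iff ZAlg _ _ _).2 (eval_var_add_var a),
    (mem_Jus_var_left_iff ZAlg _ _ _).2 (eval_var_add_var c)⟩

/-- the converse of the difference proportion fails: for all
integers `a, c` the proportion `a : 2a :: c : 2c` holds (justified by
`z → z + z`), whereas `2a − a = 2c − c` iff `a = c`; hence there are
`a, b, c, d` with `⊨ a:b::c:d` but `b − a ≠ d − c`. -/
theorem difference_converse_fails :
    (∀ a c : ℤ,
      Proportion ZAlg ZAlg a (2 * a) c (2 * c) ∧
      (Term.var, plusT Term.var Term.var) ∈ JusP ZAlg ZAlg a (2 * a) c (2 * c) ∧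
      (2 * a - a = 2 * c - c ↔ a = c)) ∧
    ∃ a b c d : ℤ, Proportion ZAlg ZAlg a b c d ∧ b - a ≠ d - c := by
  refine ⟨fun a c => ⟨proportion_two_mul a c, var_add_var_mem_JusP a c, by omega⟩, ?_⟩
  exact ⟨0, 0, 1, 2, proportion_two_mul 0 1, by norm_num⟩
end
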